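/- For m ≥ 1 a positive integer and 0 < ζ < ξ, ∫_{ζ²}^{ξ²} z^{m-1} K_0(2√z) dz = G(ξ²) − G(ζ²), where G(z) = z^m K_0(2√z) ₁F₂(1; m, m+1; z)/m + z^{m+1/2} K_1(2√z) ₁F₂(1; m+1, m+1; z)/m². -/

import Mathlib

open Real Filter Set MeasureTheory intervalIntegral

/-- Modified Bessel function of the second kind of order `t`. -/
noncomputable def besselK (t x : ℝ) : ℝ :=
  ∫ u in Set.Ioi (0 : ℝ), Real.exp (-x * Real.cosh u) * Real.cosh (t * u)

/-- Generalized hypergeometric function `₁F₂(1; a, b; z)`. -/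
noncomputable def oneF2 (a b z : ℝ) : ℝ :=
  ∑' j : ℕ, z ^ j * (Real.Gamma a * Real.Gamma b) /
    (Real.Gamma (a + j) * Real.Gamma (b + j))

/-!
Put `m = k + 1`. Expanding the two hypergeometric series, `G = (k!)² * besselKPrimitive k`
on `(0, ∞)`, where `besselKPrimitive k z = K₀(2√z) S(z) + √z K₁(2√z) T(z)` with
`T = i0Tail k = ∑_{n > k} zⁿ / (n!)²` and `S = i1Tail k = ∑_{n > k} zⁿ / ((n-1)! n!)`,
tails of the series of `I₀(2√z)` and `√z I₁(2√z)`. Termwise differentiation gives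
`S' = zᵏ / (k!)² + T` and `z T' = S`. Differentiating under the integral sign gives
`K_ν' = -(K_{ν-1} + K_{ν+1}) / 2`, and an integration by parts gives
`K_{ν+1} - K_{ν-1} = 2ν K_ν / x`; together they yield `(K₀(2√z))' = -K₁(2√z) / √z` and
`(√z K₁(2√z))' = -K₀(2√z)`. In the derivative of `besselKPrimitive k` the `K₁` terms
cancel, leaving `zᵏ K₀(2√z) / (k!)²`.
-/

open Topology
open scoped Nat

lemma cosh_le_exp_abs (v : ℝ) : cosh v ≤ exp |v| := by
  rw [← cosh_abs, ← cosh_add_sinh]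
  linarith [sinh_nonneg_iff.2 (abs_nonneg v)]

lemma abs_sinh_le_exp_abs (v : ℝ) : |sinh v| ≤ exp |v| := by
  rw [abs_sinh, ← cosh_add_sinh]
  linarith [cosh_pos |v|]

lemma eventually_mul_sub_mul_cosh_le_neg (c : ℝ) {x : ℝ} (hx : 0 < x) :
    ∀ᶠ u in atTop, c * u - x * cosh u ≤ -u := by
  filter_upwards [eventually_ge_atTop (4 * (c + 1) / x), eventually_ge_atTop 0] with u hu hu0
  have hcosh : u ^ 2 / 4 ≤ cosh u := by
    rw [cosh_eq]
    nlinarith [quadratic_le_exp_of_nonneg hu0, exp_pos (-u)]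
  have hxu : 4 * (c + 1) ≤ x * u := by rw [div_le_iff₀ hx] at hu; linarith
  nlinarith [mul_le_mul_of_nonneg_left hcosh hx.le, mul_le_mul_of_nonneg_left hxu hu0]

lemma eventually_abs_exp_neg_mul_cosh_mul_le {x : ℝ} (hx : 0 < x) (t : ℝ) {g : ℝ → ℝ}
    (hg : ∀ v, |g v| ≤ exp |v|) :
    ∀ᶠ u in atTop, |exp (-x * cosh u) * g (t * u)| ≤ exp (-u) := by
  filter_upwards [eventually_mul_sub_mul_cosh_le_neg |t| hx, eventually_ge_atTop 0] with u hu hu0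
  calc |exp (-x * cosh u) * g (t * u)| ≤ exp (-x * cosh u) * exp (|t| * u) := by
        have htu : |t| * u = |t * u| := by rw [abs_mul, abs_of_nonneg hu0]
        rw [abs_mul, abs_of_pos (exp_pos _), htu]
        exact mul_le_mul_of_nonneg_left (hg _) (exp_pos _).le
    _ = exp (|t| * u - x * cosh u) := by rw [← exp_add]; ring_nf
    _ ≤ exp (-u) := exp_le_exp.2 hu

lemma integrableOn_besselK_integrand (t : ℝ) {x : ℝ} (hx : 0 < x) :
    IntegrableOn (fun u => exp (-x * cosh u) * cosh (t * u)) (Ioi 0) := by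
  refine integrable_of_isBigO_exp_neg one_pos (by fun_prop) (.of_bound 1 ?_)
  have hcosh (v : ℝ) : |cosh v| ≤ exp |v| :=
    (abs_of_pos (cosh_pos v)).trans_le (cosh_le_exp_abs v)
  filter_upwards [eventually_abs_exp_neg_mul_cosh_mul_le hx t hcosh] with u hu
  simpa using hu

lemma tendsto_exp_neg_mul_cosh_mul_sinh (t : ℝ) {x : ℝ} (hx : 0 < x) :
    Tendsto (fun u => exp (-x * cosh u) * sinh (t * u)) atTop (𝓝 0) :=
  squeeze_zero_norm' (eventually_abs_exp_neg_mul_cosh_mul_le hx t abs_sinh_le_exp_abs)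
    tendsto_exp_neg_atTop_nhds_zero

theorem hasDerivAt_besselK (t : ℝ) {x : ℝ} (hx : 0 < x) :
    HasDerivAt (besselK t) (-(besselK (t - 1) x + besselK (t + 1) x) / 2) x := by
  let g : ℝ → ℝ → ℝ := fun y u =>
    (exp (-y * cosh u) * cosh ((t - 1) * u) + exp (-y * cosh u) * cosh ((t + 1) * u)) / 2
  have hderiv (y u : ℝ) :
      HasDerivAt (fun y => exp (-y * cosh u) * cosh (t * u)) (-g y u) y := by
    refine (((hasDerivAt_neg y).mul_const (cosh u)).exp.mul_const (cosh (t * u))).congr_deriv ?_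
    simp only [g, sub_mul, add_mul, one_mul, cosh_sub, cosh_add]
    ring
  have hbound : ∀ u, ∀ y ∈ Ioi (x / 2), ‖-g y u‖ ≤ g (x / 2) u := by
    intro u y hy
    rw [norm_neg, norm_of_nonneg (by positivity)]
    simp only [g]
    gcongr <;> exact hy.le
  have key := _root_.hasDerivAt_integral_of_dominated_loc_of_deriv_le
    (μ := volume.restrict (Ioi 0)) (F := fun y u => exp (-y * cosh u) * cosh (t * u))
    (Ioi_mem_nhds (half_lt_self hx)) (.of_forall fun y => by fun_prop)
    (integrableOn_besselK_integrand t hx) (by fun_prop) (ae_of_all _ (hbound ·))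
    (((integrableOn_besselK_integrand _ (half_pos hx)).add
      (integrableOn_besselK_integrand _ (half_pos hx))).div_const 2)
    (ae_of_all _ fun u y _ => hderiv y u)
  refine HasDerivAt.congr_deriv (f := besselK t) key.2 ?_
  rw [MeasureTheory.integral_neg, MeasureTheory.integral_div,
    integral_add (integrableOn_besselK_integrand _ hx) (integrableOn_besselK_integrand _ hx),
    neg_div]
  rfl

theorem besselK_add_one_sub_besselK_sub_one (t : ℝ) {x : ℝ} (hx : 0 < x) :
    besselK (t + 1) x - besselK (t - 1) x = 2 * t / x * besselK t x := by
  let g : ℝ → ℝ → ℝ := fun s u => exp (-x * cosh u) * cosh (s * u)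
  have hint (s : ℝ) : IntegrableOn (g s) (Ioi 0) := integrableOn_besselK_integrand s hx
  have hdiff : IntegrableOn (fun u => g (t + 1) u - g (t - 1) u) (Ioi 0) :=
    (hint _).sub (hint _)
  have hderiv : ∀ u ∈ Ici (0 : ℝ), HasDerivAt (fun u => exp (-x * cosh u) * sinh (t * u))
      (t * g t u - x / 2 * (g (t + 1) u - g (t - 1) u)) u := by
    intro u _
    refine (((hasDerivAt_cosh u).const_mul (-x)).exp.mul
      ((hasDerivAt_id u).const_mul t).sinh).congr_deriv ?_
    simp only [g, id, sub_mul, add_mul, one_mul, cosh_sub, cosh_add]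
    ring
  have hparts := integral_Ioi_of_hasDerivAt_of_tendsto' hderiv
    (((hint t).const_mul t).sub (hdiff.const_mul (x / 2)))
    (tendsto_exp_neg_mul_cosh_mul_sinh t hx)
  rw [integral_sub ((hint t).const_mul t) (hdiff.const_mul (x / 2)),
    MeasureTheory.integral_const_mul, MeasureTheory.integral_const_mul,
    integral_sub (hint _) (hint _)] at hparts
  change t * besselK t x - x / 2 * (besselK (t + 1) x - besselK (t - 1) x) = _ at hparts
  simp only [mul_zero, sinh_zero, sub_zero] at hparts
  field_simp
  linarith

lemma besselK_neg (t x : ℝ) : besselK (-t) x = besselK t x := by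
  simp only [besselK, neg_mul, cosh_neg]

theorem hasDerivAt_besselK_zero {x : ℝ} (hx : 0 < x) :
    HasDerivAt (besselK 0) (-besselK 1 x) x := by
  refine (hasDerivAt_besselK 0 hx).congr_deriv ?_
  rw [zero_sub, zero_add, besselK_neg]
  ring

theorem hasDerivAt_besselK_one {x : ℝ} (hx : 0 < x) :
    HasDerivAt (besselK 1) (-(besselK 0 x + besselK 1 x / x)) x := by
  refine (hasDerivAt_besselK 1 hx).congr_deriv ?_
  have hrec := besselK_add_one_sub_besselK_sub_one 1 hx
  norm_num at hrec ⊢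
  linarith [show 2 / x * besselK 1 x = 2 * (besselK 1 x / x) by ring]

lemma hasDerivAt_two_mul_sqrt {z : ℝ} (hz : 0 < z) :
    HasDerivAt (fun z => 2 * √z) (1 / √z) z := by
  refine ((hasDerivAt_sqrt hz.ne').const_mul 2).congr_deriv ?_
  field_simp

theorem hasDerivAt_besselK_zero_two_mul_sqrt {z : ℝ} (hz : 0 < z) :
    HasDerivAt (fun z => besselK 0 (2 * √z)) (-besselK 1 (2 * √z) / √z) z :=
  ((hasDerivAt_besselK_zero (by positivity)).comp z (hasDerivAt_two_mul_sqrt hz)).congr_deriv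
    (mul_one_div _ _)

theorem hasDerivAt_sqrt_mul_besselK_one_two_mul_sqrt {z : ℝ} (hz : 0 < z) :
    HasDerivAt (fun z => √z * besselK 1 (2 * √z)) (-besselK 0 (2 * √z)) z := by
  have hs : 0 < √z := sqrt_pos.2 hz
  refine ((hasDerivAt_sqrt hz.ne').mul
    ((hasDerivAt_besselK_one (by positivity)).comp z (hasDerivAt_two_mul_sqrt hz))).congr_deriv ?_
  simp only [Function.comp_apply]
  field_simp
  ring

lemma summable_abs_mul_pow_of_abs_le_inv_factorial {c : ℕ → ℝ}
    (hc : ∀ n, |c n| ≤ (n ! : ℝ)⁻¹) (r : ℝ) : Summable fun n => |c n| * r ^ n := by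
  refine (summable_pow_div_factorial |r|).of_norm_bounded fun n => ?_
  rw [norm_mul, norm_abs_eq_norm, norm_pow, Real.norm_eq_abs, Real.norm_eq_abs, div_eq_inv_mul]
  gcongr
  exact hc n

theorem hasDerivAt_tsum_mul_pow_add_one {c : ℕ → ℝ}
    (hc : ∀ r, Summable fun n => |c n| * r ^ n) (k : ℕ) (z : ℝ) :
    HasDerivAt (fun y => ∑' n, c n * y ^ (n + k + 1))
      (∑' n, c n * ((n + k + 1 : ℕ) * z ^ (n + k))) z := by
  obtain ⟨R, hzR, hR⟩ : ∃ R, |z| < R ∧ 1 ≤ R :=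
    ⟨|z| + 1, by linarith, by linarith [abs_nonneg z]⟩
  have hbound (n : ℕ) (y : ℝ) (hy : y ∈ Ioo (-R) R) :
      ‖c n * ((n + k + 1 : ℕ) * y ^ (n + k))‖
        ≤ (2 * R) ^ (k + 1) * (|c n| * (2 * R) ^ n) := by
    have hcast : ((n + k + 1 : ℕ) : ℝ) ≤ 2 ^ (n + k + 1) := by
      exact_mod_cast Nat.lt_two_pow_self.le
    have hpow : |y| ^ (n + k) ≤ R ^ (n + k + 1) :=
      (pow_le_pow_left₀ (abs_nonneg y) (abs_lt.2 hy).le _).trans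
        (pow_le_pow_right₀ hR (by omega))
    rw [norm_mul, norm_mul, norm_pow, Real.norm_eq_abs, Real.norm_eq_abs, Real.norm_eq_abs,
      Nat.abs_cast]
    calc |c n| * ((n + k + 1 : ℕ) * |y| ^ (n + k))
        ≤ |c n| * (2 ^ (n + k + 1) * R ^ (n + k + 1)) := by gcongr
      _ = (2 * R) ^ (k + 1) * (|c n| * (2 * R) ^ n) := by ring
  refine hasDerivAt_tsum_of_isPreconnected ((hc (2 * R)).mul_left _) isOpen_Ioo
    (convex_Ioo (-R) R).isPreconnected (fun n y _ => ?_) hbound (y₀ := 0)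
    ⟨by linarith, by linarith⟩ (by simp) (abs_lt.1 hzR)
  simpa using (hasDerivAt_pow (n + k + 1) y).const_mul (c n)

lemma abs_inv_factorial_mul_factorial_le {n a : ℕ} (b : ℕ) (h : n ≤ a) :
    |((a ! : ℝ) * b !)⁻¹| ≤ (n ! : ℝ)⁻¹ := by
  have : (n ! : ℝ) ≤ a ! * b ! := by
    exact_mod_cast (Nat.factorial_le h).trans (Nat.le_mul_of_pos_right _ (Nat.factorial_pos b))
  rw [abs_of_pos (by positivity)]
  exact inv_anti₀ (by positivity) this

noncomputable def i0Tail (k : ℕ) (z : ℝ) : ℝ :=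
  ∑' n, ((n + k + 1)! ^ 2 : ℝ)⁻¹ * z ^ (n + k + 1)

noncomputable def i1Tail (k : ℕ) (z : ℝ) : ℝ :=
  ∑' n, ((n + k)! * (n + k + 1)! : ℝ)⁻¹ * z ^ (n + k + 1)

theorem hasDerivAt_i0Tail (k : ℕ) {z : ℝ} (hz : z ≠ 0) :
    HasDerivAt (i0Tail k) (i1Tail k z / z) z := by
  have hc (n : ℕ) : |((n + k + 1)! ^ 2 : ℝ)⁻¹| ≤ (n ! : ℝ)⁻¹ := by
    rw [sq]
    exact abs_inv_factorial_mul_factorial_le _ (by omega)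
  refine (hasDerivAt_tsum_mul_pow_add_one (summable_abs_mul_pow_of_abs_le_inv_factorial hc) k z
    ).congr_deriv ?_
  rw [i1Tail, ← tsum_div_const]
  refine tsum_congr fun n => ?_
  rw [Nat.factorial_succ (n + k)]
  push_cast
  field_simp
  ring

theorem hasDerivAt_i1Tail (k : ℕ) (z : ℝ) :
    HasDerivAt (i1Tail k) (z ^ k / k ! ^ 2 + i0Tail k z) z := by
  have hc (n : ℕ) : |((n + k)! * (n + k + 1)! : ℝ)⁻¹| ≤ (n ! : ℝ)⁻¹ :=
    abs_inv_factorial_mul_factorial_le _ (by omega)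
  have hc' (n : ℕ) : |((n + k)! ^ 2 : ℝ)⁻¹| ≤ (n ! : ℝ)⁻¹ := by
    rw [sq]
    exact abs_inv_factorial_mul_factorial_le _ (by omega)
  have hsum : Summable fun n => ((n + k)! ^ 2 : ℝ)⁻¹ * z ^ (n + k) := by
    refine Summable.of_abs ?_
    simpa only [abs_mul, abs_pow, pow_add, mul_assoc] using
      (summable_abs_mul_pow_of_abs_le_inv_factorial hc' |z|).mul_right (|z| ^ k)
  refine (hasDerivAt_tsum_mul_pow_add_one (summable_abs_mul_pow_of_abs_le_inv_factorial hc) k z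
    ).congr_deriv ?_
  have hterm (n : ℕ) : ((n + k)! * (n + k + 1)! : ℝ)⁻¹ * ((n + k + 1 : ℕ) * z ^ (n + k))
      = ((n + k)! ^ 2 : ℝ)⁻¹ * z ^ (n + k) := by
    rw [Nat.factorial_succ (n + k)]
    push_cast
    field_simp
  rw [tsum_congr hterm, hsum.tsum_eq_zero_add, i0Tail]
  simp only [zero_add, Nat.add_right_comm _ 1 k]
  ring

lemma rpow_mul_oneF2_div_eq_i1Tail (k : ℕ) (z : ℝ) :
    z ^ ((k + 1 : ℕ) : ℝ) * oneF2 (k + 1 : ℕ) ((k + 1 : ℕ) + 1) z / (k + 1 : ℕ)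
      = k ! ^ 2 * i1Tail k z := by
  rw [rpow_natCast, oneF2, i1Tail, ← tsum_mul_left, ← tsum_mul_left, ← tsum_div_const]
  refine tsum_congr fun n => ?_
  have hΓ (N : ℕ) : Gamma ((N : ℝ) + 1) = N ! := Gamma_nat_eq_factorial N
  rw [show ((k + 1 : ℕ) : ℝ) = k + 1 by push_cast; ring, hΓ,
    show (k : ℝ) + 1 + 1 = ((k + 1 : ℕ) : ℝ) + 1 by push_cast; ring, hΓ,
    show (k : ℝ) + 1 + n = ((n + k : ℕ) : ℝ) + 1 by push_cast; ring, hΓ,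
    show ((k + 1 : ℕ) : ℝ) + 1 + n = ((n + k + 1 : ℕ) : ℝ) + 1 by push_cast; ring, hΓ,
    Nat.factorial_succ k]
  push_cast
  field_simp
  ring

lemma rpow_add_half_mul_oneF2_div_eq_i0Tail (k : ℕ) {z : ℝ} (hz : 0 < z) :
    z ^ (((k + 1 : ℕ) : ℝ) + 1 / 2) * oneF2 ((k + 1 : ℕ) + 1) ((k + 1 : ℕ) + 1) z
        / ((k + 1 : ℕ) : ℝ) ^ 2 = k ! ^ 2 * (√z * i0Tail k z) := by
  rw [rpow_add hz, rpow_natCast, ← sqrt_eq_rpow, oneF2, i0Tail, ← tsum_mul_left,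
    ← tsum_mul_left, ← tsum_mul_left, ← tsum_div_const]
  refine tsum_congr fun n => ?_
  have hΓ (N : ℕ) : Gamma ((N : ℝ) + 1) = N ! := Gamma_nat_eq_factorial N
  rw [hΓ, show ((k + 1 : ℕ) : ℝ) + 1 + n = ((n + k + 1 : ℕ) : ℝ) + 1 by push_cast; ring,
    hΓ, Nat.factorial_succ k]
  push_cast
  field_simp
  ring

noncomputable def besselKPrimitive (k : ℕ) (z : ℝ) : ℝ :=
  besselK 0 (2 * √z) * i1Tail k z + √z * besselK 1 (2 * √z) * i0Tail k z

theorem hasDerivAt_besselKPrimitive (k : ℕ) {z : ℝ} (hz : 0 < z) :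
    HasDerivAt (besselKPrimitive k) (z ^ k / k ! ^ 2 * besselK 0 (2 * √z)) z := by
  have hs : 0 < √z := sqrt_pos.2 hz
  refine (((hasDerivAt_besselK_zero_two_mul_sqrt hz).mul (hasDerivAt_i1Tail k z)).add
    ((hasDerivAt_sqrt_mul_besselK_one_two_mul_sqrt hz).mul
      (hasDerivAt_i0Tail k hz.ne'))).congr_deriv ?_
  field_simp
  linear_combination (k ! ^ 2 * besselK 1 (2 * √z) * i1Tail k z) * sq_sqrt hz.le

theorem stmt_9 (m : ℕ) (hm : 1 ≤ m) (ζ ξ : ℝ) (hζ : 0 < ζ) (hζξ : ζ < ξ)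
    (G : ℝ → ℝ)
    (hG : G = fun z => z ^ (m : ℝ) * besselK 0 (2 * Real.sqrt z) * oneF2 m (m + 1) z / m
        + z ^ ((m : ℝ) + 1 / 2) * besselK 1 (2 * Real.sqrt z) * oneF2 (m + 1) (m + 1) z
            / (m : ℝ) ^ 2) :
    ∫ z in (ζ ^ 2)..(ξ ^ 2), z ^ ((m : ℝ) - 1) * besselK 0 (2 * Real.sqrt z)
      = G (ξ ^ 2) - G (ζ ^ 2) := by
  obtain ⟨k, rfl⟩ := Nat.exists_eq_add_of_le' hm
  have hξ : 0 < ξ := hζ.trans hζξ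
  have hpos : ∀ z ∈ uIcc (ζ ^ 2) (ξ ^ 2), 0 < z := fun z hz =>
    (lt_min (by positivity) (by positivity)).trans_le hz.1
  have hG_eq (z : ℝ) (hz : 0 < z) : G z = k ! ^ 2 * besselKPrimitive k z := by
    rw [hG, besselKPrimitive]
    linear_combination besselK 0 (2 * √z) * rpow_mul_oneF2_div_eq_i1Tail k z
      + besselK 1 (2 * √z) * rpow_add_half_mul_oneF2_div_eq_i0Tail k hz
  have hrpow (z : ℝ) : z ^ (((k + 1 : ℕ) : ℝ) - 1) = z ^ k := by
    rw [Nat.cast_succ, add_sub_cancel_right, rpow_natCast]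
  have hderiv : ∀ z ∈ uIcc (ζ ^ 2) (ξ ^ 2),
      HasDerivAt (fun z => k ! ^ 2 * besselKPrimitive k z)
        (z ^ (((k + 1 : ℕ) : ℝ) - 1) * besselK 0 (2 * √z)) z := fun z hz => by
    refine ((hasDerivAt_besselKPrimitive k (hpos z hz)).const_mul _).congr_deriv ?_
    rw [hrpow]
    field_simp
  have hcont : ContinuousOn (fun z => z ^ (((k + 1 : ℕ) : ℝ) - 1) * besselK 0 (2 * √z))
      (uIcc (ζ ^ 2) (ξ ^ 2)) := fun z hz => by
    simp only [hrpow]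
    exact ((continuous_pow k).continuousAt.mul
      (hasDerivAt_besselK_zero_two_mul_sqrt (hpos z hz)).continuousAt).continuousWithinAt
  rw [integral_eq_sub_of_hasDerivAt hderiv hcont.intervalIntegrable, hG_eq _ (by positivity),
    hG_eq _ (by positivity)]
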